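/- Let (θ, ω) be a solution of the inertial frustrated Kuramoto model with all weights satisfying 0 ≤ ψ_{ij} ≤ ψ_u, and let c > 2, η = 1 − 2/c. Let I be an open interval of times and τ a permutation of {1,…,N} such that ω_{τ(1)}(t) ≤ … ≤ ω_{τ(N)}(t) for all t ∈ I, and define F(t) = (Σ_{i=1}^N c^{i−1}·ω_{τ(i)}(t) − Σ_{i=1}^N c^{N−i}·ω_{τ(i)}(t))/S_c and Q(t) = Y_c(θ(t)). Then for every t ∈ I: m·F'(t) + F(t) ≤ D(Ω) + 2K·ψ_u·sin α + (2K·ψ_u·cos α/η)·Q(t). -/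

import Mathlib

open Real Finset

/-- Diameter: max minus min of a finite family of reals. -/
noncomputable def diam {N : ℕ} (v : Fin N → ℝ) : ℝ := (⨆ i, v i) - (⨅ i, v i)

/-- `S_c = Σ_{n=0}^{N-1} c^n`. -/
noncomputable def Sc (N : ℕ) (c : ℝ) : ℝ := ∑ n ∈ Finset.range N, c ^ n

/-- `Y_c(z)`: difference of the two convex-type combinations of the nondecreasing
rearrangement of `z` (weights `c^{i-1}` and `c^{N-i}`), divided by `S_c`. -/
noncomputable def Yc {N : ℕ} (c : ℝ) (z : Fin N → ℝ) : ℝ :=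
  (∑ i : Fin N, c ^ (i : ℕ) * z (Tuple.sort z i) -
   ∑ i : Fin N, c ^ (N - 1 - (i : ℕ)) * z (Tuple.sort z i)) / Sc N c

/-- Difference of the two convex combinations, along a fixed permutation, of a family of
time-dependent quantities. -/
noncomputable def comb {N : ℕ} (c : ℝ) (σ : Equiv.Perm (Fin N)) (g : Fin N → ℝ → ℝ) :
    ℝ → ℝ :=
  fun t => (∑ i : Fin N, c ^ (i : ℕ) * g (σ i) t
    - ∑ i : Fin N, c ^ (N - 1 - (i : ℕ)) * g (σ i) t) / Sc N c

/-!
By the equation of motion, `m F' + F` is the `comb` combination of the right-hand sides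
`R_i = Ω_i + (K/N) Σ_j ψ_ij sin(θ_j - θ_i + α)`. Both weight families `c^{i-1}` and `c^{N-i}`
sum to `S_c`, so this combination is at most `max R - min R`. Each coupling term is bounded by
`K ψ_u (sin α + cos α · max_ij |θ_j - θ_i|)`, and the phase spread is controlled by `Y_c`:
`η (θ_j - θ_i) ≤ Y_c(θ)`, which comes from comparing the extreme weight `c^{N-1}` with `S_c`.
-/

lemma Sc_pos {N : ℕ} {c : ℝ} (hc : 0 ≤ c) (hN : 0 < N) : 0 < Sc N c :=
  geom_sum_pos hc hN.ne'

lemma sum_fin_pow_eq_Sc (N : ℕ) (c : ℝ) : ∑ k : Fin N, c ^ (k : ℕ) = Sc N c :=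
  Fin.sum_univ_eq_sum_range (c ^ ·) N

lemma sum_fin_pow_rev_eq_Sc (N : ℕ) (c : ℝ) : ∑ k : Fin N, c ^ (N - 1 - (k : ℕ)) = Sc N c := by
  rw [Fin.sum_univ_eq_sum_range (fun k => c ^ (N - 1 - k)) N]
  exact sum_range_reflect (c ^ ·) N

/-- Since `(c - 1) S_c = c^N - 1`, the top weight `c^{N-1}` exceeds `(1 - 1/c) S_c`. -/
lemma one_sub_two_div_mul_Sc_le {N : ℕ} {c : ℝ} (hc : 0 < c) (hN : 0 < N) :
    (1 - 2 / c) * Sc N c ≤ 2 * c ^ (N - 1) - Sc N c := by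
  have hgeom : Sc N c * (c - 1) = c ^ N - 1 := geom_sum_mul c N
  have hpow : c ^ N = c * c ^ (N - 1) := by rw [← pow_succ', Nat.sub_add_cancel hN]
  have h : Sc N c - c ^ (N - 1) ≤ Sc N c / c := by
    rw [le_div_iff₀ hc]
    nlinarith
  calc (1 - 2 / c) * Sc N c = Sc N c - 2 * (Sc N c / c) := by ring
    _ ≤ 2 * c ^ (N - 1) - Sc N c := by linarith

/-- Only the extreme terms are kept: `∑ c^k (w k - w 0)` and `∑ c^{N-1-k} (w (N-1) - w k)`
both dominate `c^{N-1} (w (N-1) - w 0)`. -/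
lemma sum_pow_sub_sum_pow_rev_ge {N : ℕ} (hN : 0 < N) {c : ℝ} (hc : 0 ≤ c)
    {w : Fin N → ℝ} (hw : Monotone w) :
    (2 * c ^ (N - 1) - Sc N c) * (w ⟨N - 1, by omega⟩ - w ⟨0, hN⟩) ≤
      ∑ k : Fin N, c ^ (k : ℕ) * w k - ∑ k : Fin N, c ^ (N - 1 - (k : ℕ)) * w k := by
  set lo : Fin N := ⟨0, hN⟩
  set hi : Fin N := ⟨N - 1, by omega⟩
  have hlo : ∀ k, w lo ≤ w k := fun k => hw (Fin.mk_le_of_le_val (Nat.zero_le _))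
  have hhi : ∀ k, w k ≤ w hi := fun k => hw (Fin.le_def.2 (by simp [hi]; omega))
  have hup : c ^ (N - 1) * (w hi - w lo) ≤ ∑ k : Fin N, c ^ (k : ℕ) * (w k - w lo) :=
    single_le_sum (f := fun k : Fin N => c ^ (k : ℕ) * (w k - w lo))
      (fun k _ => mul_nonneg (pow_nonneg hc _) (sub_nonneg.2 (hlo k))) (mem_univ hi)
  have hdown : c ^ (N - 1) * (w hi - w lo) ≤
      ∑ k : Fin N, c ^ (N - 1 - (k : ℕ)) * (w hi - w k) := by
    simpa [lo] using single_le_sum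
      (f := fun k : Fin N => c ^ (N - 1 - (k : ℕ)) * (w hi - w k))
      (fun k _ => mul_nonneg (pow_nonneg hc _) (sub_nonneg.2 (hhi k))) (mem_univ lo)
  simp only [mul_sub, sum_sub_distrib, ← sum_mul, sum_fin_pow_eq_Sc,
    sum_fin_pow_rev_eq_Sc] at hup hdown
  linarith

lemma mul_sub_le_Yc {N : ℕ} {c : ℝ} (hc : 2 ≤ c) (z : Fin N → ℝ) (i j : Fin N) :
    (1 - 2 / c) * (z j - z i) ≤ Yc c z := by
  have hN : 0 < N := i.pos
  have hc0 : 0 < c := by linarith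
  set σ := Tuple.sort z
  have hw : Monotone (z ∘ σ) := Tuple.monotone_sort z
  have hhi : ∀ k, z k ≤ z (σ ⟨N - 1, by omega⟩) := fun k => by
    simpa using hw (show σ.symm k ≤ ⟨N - 1, by omega⟩ from
      Fin.le_def.2 (Nat.le_sub_one_of_lt (σ.symm k).isLt))
  have hlo : ∀ k, z (σ ⟨0, hN⟩) ≤ z k := fun k => by
    simpa using hw (show (⟨0, hN⟩ : Fin N) ≤ σ.symm k from Fin.le_def.2 (Nat.zero_le _))
  have hη : 0 ≤ 1 - 2 / c := by rw [sub_nonneg, div_le_one hc0]; exact hc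
  have hS := Sc_pos hc0.le hN
  rw [Yc, le_div_iff₀ hS]
  calc (1 - 2 / c) * (z j - z i) * Sc N c
      ≤ (1 - 2 / c) * Sc N c * (z (σ ⟨N - 1, by omega⟩) - z (σ ⟨0, hN⟩)) := by
        rw [mul_right_comm]; gcongr <;> linarith [hhi j, hlo i]
    _ ≤ (2 * c ^ (N - 1) - Sc N c) * (z (σ ⟨N - 1, by omega⟩) - z (σ ⟨0, hN⟩)) := by
        gcongr
        · linarith [hhi i, hlo i]
        · exact one_sub_two_div_mul_Sc_le hc0 hN
    _ ≤ _ := sum_pow_sub_sum_pow_rev_ge hN hc0.le hw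

lemma abs_sin_add_le {α : ℝ} (hα0 : 0 ≤ α) (hα : α ≤ π / 2) (x : ℝ) :
    |sin (x + α)| ≤ sin α + cos α * |x| := by
  have hsin : 0 ≤ sin α := sin_nonneg_of_nonneg_of_le_pi hα0 (by linarith [pi_pos])
  have hcos : 0 ≤ cos α := cos_nonneg_of_mem_Icc ⟨by linarith [pi_pos], hα⟩
  calc |sin (x + α)| = |sin x * cos α + cos x * sin α| := by rw [sin_add]
    _ ≤ |sin x| * cos α + |cos x| * sin α := by
        grw [abs_add_le, abs_mul, abs_mul, abs_of_nonneg hsin, abs_of_nonneg hcos]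
    _ ≤ |x| * cos α + 1 * sin α :=
        add_le_add (mul_le_mul_of_nonneg_right abs_sin_le_abs hcos)
          (mul_le_mul_of_nonneg_right (abs_cos_le_one x) hsin)
    _ = sin α + cos α * |x| := by ring

lemma abs_coupling_le {N : ℕ} (hN : 0 < N) {K α ψu L : ℝ} (hK : 0 ≤ K) (hα0 : 0 ≤ α)
    (hα : α ≤ π / 2) (ψ x : Fin N → ℝ) (hψ : ∀ j, 0 ≤ ψ j ∧ ψ j ≤ ψu)
    (hx : ∀ j, |x j| ≤ L) :
    |(K / N) * ∑ j : Fin N, ψ j * sin (x j + α)| ≤ K * (ψu * (sin α + cos α * L)) := by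
  have hcos : 0 ≤ cos α := cos_nonneg_of_mem_Icc ⟨by linarith [pi_pos], hα⟩
  have hterm : ∀ j, |ψ j * sin (x j + α)| ≤ ψu * (sin α + cos α * L) := fun j => by
    have hs : |sin (x j + α)| ≤ sin α + cos α * L :=
      (abs_sin_add_le hα0 hα (x j)).trans (by gcongr; exact hx j)
    rw [abs_mul, abs_of_nonneg (hψ j).1]
    exact mul_le_mul (hψ j).2 hs (abs_nonneg _) ((hψ j).1.trans (hψ j).2)
  have hNR : (0 : ℝ) < N := Nat.cast_pos.2 hN
  calc |(K / N) * ∑ j : Fin N, ψ j * sin (x j + α)|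
      = K / N * |∑ j : Fin N, ψ j * sin (x j + α)| := by
        rw [abs_mul, abs_of_nonneg (by positivity)]
    _ ≤ K / N * ∑ _j : Fin N, ψu * (sin α + cos α * L) := by
        gcongr
        exact (abs_sum_le_sum_abs _ _).trans (sum_le_sum fun j _ => hterm j)
    _ = K * (ψu * (sin α + cos α * L)) := by
        rw [sum_const, card_univ, Fintype.card_fin, nsmul_eq_mul]
        field_simp

section comb

variable {N : ℕ} {c : ℝ} (σ : Equiv.Perm (Fin N))

lemma comb_le_sub (hc : 0 ≤ c) (hN : 0 < N) (g : Fin N → ℝ → ℝ) (t lo hi : ℝ)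
    (hg : ∀ i, lo ≤ g i t ∧ g i t ≤ hi) : comb c σ g t ≤ hi - lo := by
  have hup : ∑ i : Fin N, c ^ (i : ℕ) * g (σ i) t ≤ Sc N c * hi := by
    rw [← sum_fin_pow_eq_Sc, sum_mul]
    exact sum_le_sum fun i _ => mul_le_mul_of_nonneg_left (hg _).2 (pow_nonneg hc _)
  have hdown : Sc N c * lo ≤ ∑ i : Fin N, c ^ (N - 1 - (i : ℕ)) * g (σ i) t := by
    rw [← sum_fin_pow_rev_eq_Sc, sum_mul]
    exact sum_le_sum fun i _ => mul_le_mul_of_nonneg_left (hg _).1 (pow_nonneg hc _)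
  rw [comb, div_le_iff₀ (Sc_pos hc hN)]
  linarith

lemma hasDerivAt_comb {g g' : Fin N → ℝ → ℝ} {t : ℝ}
    (hg : ∀ i, HasDerivAt (g i) (g' i t) t) :
    HasDerivAt (comb c σ g) (comb c σ g' t) t :=
  ((HasDerivAt.fun_sum fun i _ => (hg (σ i)).const_mul _).sub
    (HasDerivAt.fun_sum fun i _ => (hg (σ i)).const_mul _)).div_const _

lemma mul_comb_add_comb (m : ℝ) (g g' : Fin N → ℝ → ℝ) (t : ℝ) :
    m * comb c σ g' t + comb c σ g t = comb c σ (fun i s => m * g' i s + g i s) t := by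
  simp only [comb, mul_add, sum_add_distrib, mul_left_comm _ m, ← mul_sum]
  ring

end comb

theorem stmt11_general {N : ℕ} (hN : 2 ≤ N) (m K α ψu : ℝ) (hK : 0 < K)
    (hα0 : 0 < α) (hα : α < π / 2)
    (Ω : Fin N → ℝ) (ψ : Fin N → Fin N → ℝ)
    (hψ : ∀ i j, 0 ≤ ψ i j ∧ ψ i j ≤ ψu)
    (θ : Fin N → ℝ → ℝ) (hsmooth : ∀ i, ContDiff ℝ 2 (θ i))
    (hode : ∀ i, ∀ t : ℝ, 0 ≤ t →
      m * deriv (deriv (θ i)) t + deriv (θ i) t =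
        Ω i + (K / N) * ∑ j : Fin N, ψ i j * Real.sin (θ j t - θ i t + α))
    (c η : ℝ) (hc : 2 < c) (hη : η = 1 - 2 / c)
    (t1 t2 : ℝ) (ht1 : 0 ≤ t1)
    (τ : Equiv.Perm (Fin N)) :
    ∀ t ∈ Set.Ioo t1 t2,
      m * deriv (comb c τ (fun i => deriv (θ i))) t
          + comb c τ (fun i => deriv (θ i)) t ≤
        diam Ω + 2 * K * ψu * Real.sin α
          + (2 * K * ψu * Real.cos α / η) * Yc c (fun i => θ i t) := by
  intro t ⟨htl, _⟩
  have hN0 : 0 < N := by omega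
  have hηpos : 0 < η := by rw [hη, sub_pos, div_lt_one (by linarith)]; exact hc
  set L := Yc c (fun i => θ i t) / η
  have hgap : ∀ i j, θ j t - θ i t ≤ L := fun i j => by
    rw [le_div_iff₀ hηpos, mul_comm, hη]
    exact mul_sub_le_Yc hc.le (fun i => θ i t) i j
  set B := K * (ψu * (sin α + cos α * L))
  have hforce : ∀ i, (⨅ j, Ω j) - B ≤ m * deriv (deriv (θ i)) t + deriv (θ i) t ∧
      m * deriv (deriv (θ i)) t + deriv (θ i) t ≤ (⨆ j, Ω j) + B := fun i => by
    rw [hode i t (ht1.trans htl.le)]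
    have hcoup := abs_le.1 (abs_coupling_le hN0 hK.le hα0.le hα.le (ψ i)
      (fun j => θ j t - θ i t) (hψ i) (fun j => abs_le.2 ⟨by linarith [hgap j i], hgap i j⟩))
    have := ciInf_le (Set.finite_range Ω).bddBelow i
    have := le_ciSup (Set.finite_range Ω).bddAbove i
    constructor <;> linarith
  calc m * deriv (comb c τ (fun i => deriv (θ i))) t + comb c τ (fun i => deriv (θ i)) t
      = comb c τ (fun i s => m * deriv (deriv (θ i)) s + deriv (θ i) s) t := by
        rw [(hasDerivAt_comb τ fun i => ((hsmooth i).differentiable_deriv_two t).hasDerivAt).deriv,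
          mul_comb_add_comb]
    _ ≤ (⨆ j, Ω j) + B - ((⨅ j, Ω j) - B) :=
        comb_le_sub τ (by linarith) hN0 _ t _ _ hforce
    _ = _ := by
        simp only [diam, B, L]
        field_simp
        ring

/-- first-order differential inequality for the frequency combination `F`. -/
theorem stmt11 {N : ℕ} (hN : 2 ≤ N) (m K α ψu : ℝ) (hm : 0 < m) (hK : 0 < K)
    (hα0 : 0 < α) (hα : α < π / 2)
    (Ω : Fin N → ℝ) (ψ : Fin N → Fin N → ℝ)
    (hψ : ∀ i j, 0 ≤ ψ i j ∧ ψ i j ≤ ψu)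
    (θ : Fin N → ℝ → ℝ) (hsmooth : ∀ i, ContDiff ℝ 2 (θ i))
    (hode : ∀ i, ∀ t : ℝ, 0 ≤ t →
      m * deriv (deriv (θ i)) t + deriv (θ i) t =
        Ω i + (K / N) * ∑ j : Fin N, ψ i j * Real.sin (θ j t - θ i t + α))
    (c η : ℝ) (hc : 2 < c) (hη : η = 1 - 2 / c)
    (t1 t2 : ℝ) (ht1 : 0 ≤ t1)
    (τ : Equiv.Perm (Fin N))
    (hord : ∀ t ∈ Set.Ioo t1 t2, Monotone fun i => deriv (θ (τ i)) t) :
    ∀ t ∈ Set.Ioo t1 t2,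
      m * deriv (comb c τ (fun i => deriv (θ i))) t
          + comb c τ (fun i => deriv (θ i)) t ≤
        diam Ω + 2 * K * ψu * Real.sin α
          + (2 * K * ψu * Real.cos α / η) * Yc c (fun i => θ i t) :=
  stmt11_general hN m K α ψu hK hα0 hα Ω ψ hψ θ hsmooth hode c η hc hη t1 t2 ht1 τ
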